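/- For all integers i, j with i ≥ 1 and 0 ≤ j ≤ i, every graph G in the family F_{i,j} has every vertex of degree two or three, and has exactly i − j vertices of degree two. -/

import Mathlib

open SimpleGraph

/-- The minimum size of a feedback vertex set of `G`. -/
noncomputable def phi {V : Type} (G : SimpleGraph V) : ℕ :=
  sInf {n : ℕ | ∃ S : Finset V, S.card = n ∧ (G.induce ((S : Set V)ᶜ)).IsAcyclic}

/-- The graph obtained from `H` by subdividing the edge `uv` once: delete the edge `uv`
and add a new vertex (`none`) adjacent exactly to `u` and `v`. -/
def subdivideEdge {V : Type} (H : SimpleGraph V) (u v : V) : SimpleGraph (Option V) :=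
  SimpleGraph.fromRel (fun x y =>
    (∃ p q : V, x = some p ∧ y = some q ∧ H.Adj p q ∧ s(p, q) ≠ s(u, v)) ∨
    (x = none ∧ (y = some u ∨ y = some v)))

/-- `a` has degree exactly two in `H`. -/
def HasDegreeTwo {V : Type} (H : SimpleGraph V) (a : V) : Prop :=
  ∃ x y : V, x ≠ y ∧ H.Adj a x ∧ H.Adj a y ∧ ∀ z : V, H.Adj a z → z = x ∨ z = y

/-- The operation `∘` applied with two distinct edges `u₁v₁`, `u₂v₂` and a degree-two vertex `a`:
subdivide both edges (new vertices `inr 0`, `inr 1`), then add a new vertex `inr 2` adjacent to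
`a` and the two subdivision vertices. -/
def circOpTwo {V : Type} (H : SimpleGraph V) (u₁ v₁ u₂ v₂ a : V) : SimpleGraph (V ⊕ Fin 3) :=
  SimpleGraph.fromRel (fun x y =>
    (∃ p q : V, x = Sum.inl p ∧ y = Sum.inl q ∧ H.Adj p q ∧
      s(p, q) ≠ s(u₁, v₁) ∧ s(p, q) ≠ s(u₂, v₂)) ∨
    (x = Sum.inr 0 ∧ (y = Sum.inl u₁ ∨ y = Sum.inl v₁)) ∨
    (x = Sum.inr 1 ∧ (y = Sum.inl u₂ ∨ y = Sum.inl v₂)) ∨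
    (x = Sum.inr 2 ∧ (y = Sum.inl a ∨ y = Sum.inr 0 ∨ y = Sum.inr 1)))

/-- The operation `∘` applied with `e₁ = e₂ = uv` and a degree-two vertex `a`: subdivide the
edge `uv` twice (replacing it by the path `u, inr 0, inr 1, v`), then add a new vertex `inr 2`
adjacent to `a` and the two subdivision vertices. -/
def circOpOne {V : Type} (H : SimpleGraph V) (u v a : V) : SimpleGraph (V ⊕ Fin 3) :=
  SimpleGraph.fromRel (fun x y =>
    (∃ p q : V, x = Sum.inl p ∧ y = Sum.inl q ∧ H.Adj p q ∧ s(p, q) ≠ s(u, v)) ∨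
    (x = Sum.inr 0 ∧ (y = Sum.inl u ∨ y = Sum.inr 1)) ∨
    (x = Sum.inr 1 ∧ y = Sum.inl v) ∨
    (x = Sum.inr 2 ∧ (y = Sum.inl a ∨ y = Sum.inr 0 ∨ y = Sum.inr 1)))

/-- `G` is obtained from `H` by one application of the operation `∘` at the degree-two
vertex `a`, using two (not necessarily distinct) edges of `H`. -/
def IsCircOp {V : Type} (H : SimpleGraph V) (a : V) (G : SimpleGraph (V ⊕ Fin 3)) : Prop :=
  (∃ u₁ v₁ u₂ v₂ : V, H.Adj u₁ v₁ ∧ H.Adj u₂ v₂ ∧ s(u₁, v₁) ≠ s(u₂, v₂) ∧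
      G = circOpTwo H u₁ v₁ u₂ v₂ a) ∨
  (∃ u v : V, H.Adj u v ∧ G = circOpOne H u v a)

/-- Membership (up to isomorphism) in the family `F_{i,j}`. -/
inductive IsInF : ∀ (i j : ℕ) {V : Type}, SimpleGraph V → Prop
  | cycle (i : ℕ) (hi : 3 ≤ i) : IsInF i 0 (SimpleGraph.cycleGraph i)
  | k4 : IsInF 1 1 (⊤ : SimpleGraph (Fin 4))
  | subdiv {i j : ℕ} {V : Type} {H : SimpleGraph V} {u v : V}
      (huv : H.Adj u v) (hH : IsInF i j H) : IsInF (i + 1) j (subdivideEdge H u v)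
  | op {i j : ℕ} {V : Type} {H : SimpleGraph V} {a : V} {G : SimpleGraph (V ⊕ Fin 3)}
      (ha : HasDegreeTwo H a) (hG : IsCircOp H a G) (hH : IsInF i j H) : IsInF i (j + 1) G
  | iso {i j : ℕ} {V W : Type} {H : SimpleGraph V} {G : SimpleGraph W}
      (e : Nonempty (G ≃g H)) (hH : IsInF i j H) : IsInF i j G

/-- `G` is a graph obtained from `H` by repeatedly (possibly zero times) subdividing edges. -/
inductive IsSubdivisionOf : ∀ {V : Type}, SimpleGraph V → ∀ {W : Type}, SimpleGraph W → Prop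
  | refl {V : Type} (G : SimpleGraph V) : IsSubdivisionOf G G
  | step {V W : Type} {H : SimpleGraph V} {G : SimpleGraph W} {u v : W}
      (huv : G.Adj u v) (h : IsSubdivisionOf H G) : IsSubdivisionOf H (subdivideEdge G u v)

/-- `G` contains an induced subdivision of `H`: some induced subgraph of `G` is isomorphic
to a graph obtained from `H` by repeatedly subdividing edges. -/
def ContainsInducedSubdivision {V W : Type} (G : SimpleGraph V) (H : SimpleGraph W) : Prop :=
  ∃ (s : Set V) (U : Type) (K : SimpleGraph U),
    IsSubdivisionOf H K ∧ Nonempty (G.induce s ≃g K)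

/-- The family `𝓕`: members of `F_{4,2} ∪ F_{4,3}` of girth at least five, together with
members `H` of `F_{3,2} ∪ F_{3,3}` having an edge `e` such that `H − e` has girth at least
five. -/
def InFamilyF {W : Type} (H : SimpleGraph W) : Prop :=
  ((IsInF 4 2 H ∨ IsInF 4 3 H) ∧ 5 ≤ H.girth) ∨
  ((IsInF 3 2 H ∨ IsInF 3 3 H) ∧ ∃ e ∈ H.edgeSet, 5 ≤ (H.deleteEdges {e}).girth)

/-- `G` contains two vertex-disjoint cycles, each of length less than five. -/
def HasTwoDisjointShortCycles {V : Type} (G : SimpleGraph V) : Prop :=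
  ∃ (u v : V) (c₁ : G.Walk u u) (c₂ : G.Walk v v), c₁.IsCycle ∧ c₂.IsCycle ∧
    c₁.length < 5 ∧ c₂.length < 5 ∧ ∀ x : V, x ∈ c₁.support → x ∉ c₂.support

/-!
The operation `∘` is, up to isomorphism, two subdivisions followed by adding a new vertex joined to
three vertices of degree two: `a` and the two subdivision vertices. A subdivision keeps every
degree and creates one vertex of degree two; the new vertex has degree three and raises its three
neighbours from degree two to three. Hence subdividing adds one vertex of degree two and `∘` removes
one, starting from `i` such vertices on the cycle `C_i` and none on `K₄`. As `a` has degree two,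
`∘` only applies when there is such a vertex, which also gives `j ≤ i`.
-/

lemma HasDegreeTwo.ncard_neighborSet {V : Type} {H : SimpleGraph V} {a : V}
    (h : HasDegreeTwo H a) : (H.neighborSet a).ncard = 2 := by
  obtain ⟨x, y, hxy, hax, hay, hall⟩ := h
  have : H.neighborSet a = {x, y} := by
    ext z
    exact ⟨hall z, by rintro (rfl | rfl) <;> assumption⟩
  rw [this, Set.ncard_pair hxy]

section subdivideEdge

variable {V : Type} (H : SimpleGraph V) (u v : V)

@[simp] lemma subdivideEdge_adj_some_some (p q : V) :
    (subdivideEdge H u v).Adj (some p) (some q) ↔ H.Adj p q ∧ s(p, q) ≠ s(u, v) := by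
  simp only [subdivideEdge, fromRel_adj, ne_eq, Option.some.injEq, reduceCtorEq, false_and,
    or_false, exists_and_left, exists_eq_left']
  rw [H.adj_comm q p, Sym2.eq_swap (a := q), or_self, and_iff_right_iff_imp]
  exact fun h => h.1.ne

@[simp] lemma subdivideEdge_adj_none_some (q : V) :
    (subdivideEdge H u v).Adj none (some q) ↔ q = u ∨ q = v := by
  simp [subdivideEdge]

@[simp] lemma subdivideEdge_adj_some_none (p : V) :
    (subdivideEdge H u v).Adj (some p) none ↔ p = u ∨ p = v := by
  simp [subdivideEdge]

variable {H u v}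

open Classical in
lemma neighborSet_subdivideEdge_some (huv : H.Adj u v) (w : V) :
    (subdivideEdge H u v).neighborSet (some w) =
      (fun q => if s(w, q) = s(u, v) then none else some q) '' H.neighborSet w := by
  ext (_ | q)
  · simp only [SimpleGraph.mem_neighborSet, subdivideEdge_adj_some_none, Set.mem_image,
      ite_eq_left_iff, reduceCtorEq, imp_false, not_not]
    constructor
    · rintro (rfl | rfl)
      exacts [⟨v, huv, rfl⟩, ⟨u, huv.symm, Sym2.eq_swap⟩]
    · rintro ⟨q, -, h⟩
      exact Sym2.mem_iff.mp (h ▸ Sym2.mem_mk_left w q)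
  · simp

lemma ncard_neighborSet_subdivideEdge_some (huv : H.Adj u v) (w : V) :
    ((subdivideEdge H u v).neighborSet (some w)).ncard = (H.neighborSet w).ncard := by
  classical
  rw [neighborSet_subdivideEdge_some huv]
  refine Set.InjOn.ncard_image fun q _ q' _ h => ?_
  split_ifs at h with hq hq'
  · exact Sym2.congr_right.mp (hq.trans hq'.symm)
  · exact Option.some_injective _ h

lemma ncard_neighborSet_subdivideEdge_none (huv : H.Adj u v) :
    ((subdivideEdge H u v).neighborSet none).ncard = 2 := by
  have : (subdivideEdge H u v).neighborSet none = {some u, some v} := by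
    ext (_ | q) <;> simp
  rw [this, Set.ncard_pair (by simpa using huv.ne)]

end subdivideEdge

namespace SimpleGraph

variable {V : Type}

lemma ncard_neighborSet_eq_degree [Fintype V] (G : SimpleGraph V) [DecidableRel G.Adj] (v : V) :
    (G.neighborSet v).ncard = G.degree v := by
  rw [← Nat.card_coe_set_eq, Nat.card_eq_fintype_card, card_neighborSet_eq_degree]

lemma Iso.ncard_neighborSet {W : Type} {G : SimpleGraph V} {H : SimpleGraph W} (e : G ≃g H)
    (v : V) : (H.neighborSet (e v)).ncard = (G.neighborSet v).ncard :=
  (Set.ncard_congr' (e.mapNeighborSet v)).symm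

def addApex (G : SimpleGraph V) (s : Set V) : SimpleGraph (Option V) where
  Adj
    | some p, some q => G.Adj p q
    | some p, none => p ∈ s
    | none, some q => q ∈ s
    | none, none => False
  symm := ⟨by
    rintro (_ | p) (_ | q) h
    exacts [h, h, h, h.symm]⟩
  loopless := ⟨by
    rintro (_ | p) h
    exacts [h, G.loopless.irrefl p h]⟩

section addApex

variable (G : SimpleGraph V) (s : Set V)

@[simp] lemma addApex_adj_some_some (p q : V) :
    (G.addApex s).Adj (some p) (some q) ↔ G.Adj p q := Iff.rfl

@[simp] lemma addApex_adj_some_none (p : V) : (G.addApex s).Adj (some p) none ↔ p ∈ s := Iff.rfl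

@[simp] lemma addApex_adj_none_some (q : V) : (G.addApex s).Adj none (some q) ↔ q ∈ s := Iff.rfl

variable {G s}

lemma ncard_neighborSet_addApex_none : ((G.addApex s).neighborSet none).ncard = s.ncard := by
  have : (G.addApex s).neighborSet none = some '' s := by
    ext (_ | q) <;> simp
  rw [this, Set.ncard_image_of_injective _ (Option.some_injective V)]

lemma ncard_neighborSet_addApex_some_of_notMem {v : V} (hv : v ∉ s) :
    ((G.addApex s).neighborSet (some v)).ncard = (G.neighborSet v).ncard := by
  have : (G.addApex s).neighborSet (some v) = some '' G.neighborSet v := by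
    ext (_ | q) <;> simp [hv]
  rw [this, Set.ncard_image_of_injective _ (Option.some_injective V)]

lemma ncard_neighborSet_addApex_some_of_mem [Finite V] {v : V} (hv : v ∈ s) :
    ((G.addApex s).neighborSet (some v)).ncard = (G.neighborSet v).ncard + 1 := by
  have : (G.addApex s).neighborSet (some v) = insert none (some '' G.neighborSet v) := by
    ext (_ | q) <;> simp [hv]
  rw [this, Set.ncard_insert_of_notMem (by simp),
    Set.ncard_image_of_injective _ (Option.some_injective V)]

end addApex

structure DegreesTwoOrThree (G : SimpleGraph V) (n : ℕ) : Prop where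
  two_or_three : ∀ v, (G.neighborSet v).ncard = 2 ∨ (G.neighborSet v).ncard = 3
  ncard_degree_two : {v | (G.neighborSet v).ncard = 2}.ncard = n

namespace DegreesTwoOrThree

variable {G : SimpleGraph V} {n : ℕ}

lemma of_iso {W : Type} {H : SimpleGraph W} (h : DegreesTwoOrThree H n) (e : G ≃g H) :
    DegreesTwoOrThree G n where
  two_or_three v := e.ncard_neighborSet v ▸ h.two_or_three (e v)
  ncard_degree_two := by
    have : {v | (G.neighborSet v).ncard = 2} = e ⁻¹' {w | (H.neighborSet w).ncard = 2} := by
      ext v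
      simp [e.ncard_neighborSet]
    rw [this, Set.ncard_preimage_of_injective_subset_range e.injective (by simp),
      h.ncard_degree_two]

lemma cycleGraph (n : ℕ) : DegreesTwoOrThree (SimpleGraph.cycleGraph (n + 3)) (n + 3) := by
  have h2 (v : Fin (n + 3)) : ((SimpleGraph.cycleGraph (n + 3)).neighborSet v).ncard = 2 := by
    rw [ncard_neighborSet_eq_degree, cycleGraph_degree_three_le]
  refine ⟨fun v => .inl (h2 v), ?_⟩
  simp [h2]

lemma top_fin_four : DegreesTwoOrThree (⊤ : SimpleGraph (Fin 4)) 0 := by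
  have h3 (v : Fin 4) : ((⊤ : SimpleGraph (Fin 4)).neighborSet v).ncard = 3 := by
    rw [ncard_neighborSet_eq_degree, complete_graph_degree]
    rfl
  refine ⟨fun v => .inr (h3 v), ?_⟩
  simp only [h3]
  simp

lemma subdivideEdge [Finite V] (h : DegreesTwoOrThree G n) {u v : V} (huv : G.Adj u v) :
    DegreesTwoOrThree (subdivideEdge G u v) (n + 1) where
  two_or_three
    | none => .inl (ncard_neighborSet_subdivideEdge_none huv)
    | some w => ncard_neighborSet_subdivideEdge_some huv w ▸ h.two_or_three w
  ncard_degree_two := by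
    have : {x | ((_root_.subdivideEdge G u v).neighborSet x).ncard = 2} =
        insert none (some '' {w | (G.neighborSet w).ncard = 2}) := by
      ext (_ | w)
      · simp [ncard_neighborSet_subdivideEdge_none huv]
      · simp [ncard_neighborSet_subdivideEdge_some huv]
    rw [this, Set.ncard_insert_of_notMem (by simp),
      Set.ncard_image_of_injective _ (Option.some_injective V), h.ncard_degree_two]

lemma addApex [Finite V] (h : DegreesTwoOrThree G n) {s : Set V}
    (hs : s ⊆ {v | (G.neighborSet v).ncard = 2}) (hs3 : s.ncard = 3) :
    DegreesTwoOrThree (G.addApex s) (n - 3) where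
  two_or_three
    | none => .inr (ncard_neighborSet_addApex_none.trans hs3)
    | some w => by
      by_cases hw : w ∈ s
      · rw [ncard_neighborSet_addApex_some_of_mem hw, hs hw]
        exact .inr rfl
      · rw [ncard_neighborSet_addApex_some_of_notMem hw]
        exact h.two_or_three w
  ncard_degree_two := by
    have : {x | ((G.addApex s).neighborSet x).ncard = 2} =
        some '' ({w | (G.neighborSet w).ncard = 2} \ s) := by
      ext (_ | w)
      · simp [ncard_neighborSet_addApex_none, hs3]
      · by_cases hw : w ∈ s
        · have h2 : (G.neighborSet w).ncard = 2 := hs hw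
          simp [ncard_neighborSet_addApex_some_of_mem hw, h2, hw]
        · simp [ncard_neighborSet_addApex_some_of_notMem hw, hw]
    rw [this, Set.ncard_image_of_injective _ (Option.some_injective V), Set.ncard_sdiff hs,
      h.ncard_degree_two, hs3]

end DegreesTwoOrThree

end SimpleGraph

/-- Sends the subdivision vertices `inr 0`, `inr 1` and the new vertex `inr 2` of `circOpTwo` and
`circOpOne` to the vertices created by the first subdivision, the second subdivision and
`addApex`. -/
def sumFinThreeEquivOption (V : Type) : V ⊕ Fin 3 ≃ Option (Option (Option V)) where
  toFun
    | .inl p => some (some (some p))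
    | .inr 0 => some (some none)
    | .inr 1 => some none
    | .inr 2 => none
  invFun
    | some (some (some p)) => .inl p
    | some (some none) => .inr 0
    | some none => .inr 1
    | none => .inr 2
  left_inv := by rintro (p | k) <;> [rfl; fin_cases k <;> rfl]
  right_inv := by rintro (_ | _ | _ | p) <;> rfl

section circOp

variable {V : Type} (H : SimpleGraph V)

lemma circOpTwo_adj_inl_inl (u₁ v₁ u₂ v₂ a p q : V) :
    (circOpTwo H u₁ v₁ u₂ v₂ a).Adj (.inl p) (.inl q) ↔
      H.Adj p q ∧ s(p, q) ≠ s(u₁, v₁) ∧ s(p, q) ≠ s(u₂, v₂) := by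
  simp only [circOpTwo, fromRel_adj, ne_eq, Sum.inl.injEq, reduceCtorEq, false_and, or_false,
    exists_and_left, exists_eq_left']
  rw [H.adj_comm q p, Sym2.eq_swap (a := q), or_self, and_iff_right_iff_imp]
  exact fun h => h.1.ne

lemma circOpOne_adj_inl_inl (u v a p q : V) :
    (circOpOne H u v a).Adj (.inl p) (.inl q) ↔ H.Adj p q ∧ s(p, q) ≠ s(u, v) := by
  simp only [circOpOne, fromRel_adj, ne_eq, Sum.inl.injEq, reduceCtorEq, false_and, or_false,
    exists_and_left, exists_eq_left']
  rw [H.adj_comm q p, Sym2.eq_swap (a := q), or_self, and_iff_right_iff_imp]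
  exact fun h => h.1.ne

def circOpTwoIsoAddApex (u₁ v₁ u₂ v₂ a : V) :
    circOpTwo H u₁ v₁ u₂ v₂ a ≃g
      (subdivideEdge (subdivideEdge H u₁ v₁) (some u₂) (some v₂)).addApex
        {some (some a), some none, none} where
  toEquiv := sumFinThreeEquivOption V
  map_rel_iff' := by
    rintro (p | k) (q | l)
    · simp [sumFinThreeEquivOption, circOpTwo_adj_inl_inl, and_assoc]
    all_goals (try fin_cases k) <;> (try fin_cases l) <;> simp [sumFinThreeEquivOption, circOpTwo]

def circOpOneIsoAddApex {u v : V} (huv : u ≠ v) (a : V) :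
    circOpOne H u v a ≃g (subdivideEdge (subdivideEdge H u v) none (some v)).addApex
      {some (some a), some none, none} where
  toEquiv := sumFinThreeEquivOption V
  map_rel_iff' := by
    rintro (p | k) (q | l)
    · simp [sumFinThreeEquivOption, circOpOne_adj_inl_inl]
    all_goals (try fin_cases k) <;> (try fin_cases l) <;>
      simp [sumFinThreeEquivOption, circOpOne, or_and_right]
    all_goals rintro rfl; exact huv

end circOp

namespace SimpleGraph.DegreesTwoOrThree

lemma addApex_subdivideEdge_subdivideEdge {V : Type} [Finite V] {H : SimpleGraph V}
    {n : ℕ} (h : DegreesTwoOrThree H n) {a u v : V} (ha : (H.neighborSet a).ncard = 2)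
    (huv : H.Adj u v) {x y : Option V} (hxy : (_root_.subdivideEdge H u v).Adj x y) :
    DegreesTwoOrThree ((_root_.subdivideEdge (_root_.subdivideEdge H u v) x y).addApex
      {some (some a), some none, none}) (n - 1) := by
  have hs : {some (some a), some none, none} ⊆
      {z | ((_root_.subdivideEdge (_root_.subdivideEdge H u v) x y).neighborSet z).ncard = 2} := by
    rintro z (rfl | rfl | rfl)
    · rw [Set.mem_ofPred_eq, ncard_neighborSet_subdivideEdge_some hxy,
        ncard_neighborSet_subdivideEdge_some huv, ha]
    · rw [Set.mem_ofPred_eq, ncard_neighborSet_subdivideEdge_some hxy,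
        ncard_neighborSet_subdivideEdge_none huv]
    · exact ncard_neighborSet_subdivideEdge_none hxy
  have hs3 : ({some (some a), some none, none} : Set (Option (Option V))).ncard = 3 :=
    Set.ncard_eq_three.mpr ⟨_, _, _, by simp, by simp, by simp, rfl⟩
  simpa using ((h.subdivideEdge huv).subdivideEdge hxy).addApex hs hs3

lemma circOp {V : Type} [Finite V] {H : SimpleGraph V} {n : ℕ} (h : DegreesTwoOrThree H n)
    {a : V} (ha : HasDegreeTwo H a) {G : SimpleGraph (V ⊕ Fin 3)} (hG : IsCircOp H a G) :
    DegreesTwoOrThree G (n - 1) := by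
  rcases hG with ⟨u₁, v₁, u₂, v₂, h₁, h₂, hne, rfl⟩ | ⟨u, v, huv, rfl⟩
  · have h₂' : (_root_.subdivideEdge H u₁ v₁).Adj (some u₂) (some v₂) :=
      (subdivideEdge_adj_some_some ..).mpr ⟨h₂, hne.symm⟩
    exact (h.addApex_subdivideEdge_subdivideEdge ha.ncard_neighborSet h₁ h₂').of_iso
      (circOpTwoIsoAddApex H u₁ v₁ u₂ v₂ a)
  · have hv : (_root_.subdivideEdge H u v).Adj none (some v) := by simp
    exact (h.addApex_subdivideEdge_subdivideEdge ha.ncard_neighborSet huv hv).of_iso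
      (circOpOneIsoAddApex H huv.ne a)

end SimpleGraph.DegreesTwoOrThree

lemma IsInF.finite {i j : ℕ} {V : Type} {G : SimpleGraph V} (h : IsInF i j G) : Finite V := by
  induction h with
  | cycle | k4 | subdiv | op => infer_instance
  | iso e _ _ => exact Finite.of_equiv _ e.some.toEquiv.symm

lemma IsInF.degreesTwoOrThree {i j : ℕ} {V : Type} {G : SimpleGraph V} (h : IsInF i j G) :
    j ≤ i ∧ G.DegreesTwoOrThree (i - j) := by
  induction h with
  | cycle i hi =>
    obtain ⟨n, rfl⟩ := Nat.exists_eq_add_of_le' hi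
    exact ⟨by omega, DegreesTwoOrThree.cycleGraph n⟩
  | k4 => exact ⟨le_rfl, DegreesTwoOrThree.top_fin_four⟩
  | subdiv huv hH ih =>
    have := hH.finite
    obtain ⟨hji, hD⟩ := ih
    refine ⟨by omega, ?_⟩
    rw [Nat.sub_add_comm hji]
    exact hD.subdivideEdge huv
  | @op i j W H a G ha hG hH ih =>
    have := hH.finite
    obtain ⟨hji, hD⟩ := ih
    have : 0 < i - j :=
      hD.ncard_degree_two ▸ (Set.ncard_pos (Set.toFinite _)).2 ⟨a, ha.ncard_neighborSet⟩
    refine ⟨by omega, ?_⟩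
    rw [Nat.sub_add_eq]
    exact hD.circOp ha hG
  | iso e _ ih => exact ⟨ih.1, ih.2.of_iso e.some⟩

theorem statement_3_general (i j : ℕ) {V : Type} (G : SimpleGraph V)
    (hG : IsInF i j G) :
    (∀ v : V, (G.neighborSet v).ncard = 2 ∨ (G.neighborSet v).ncard = 3) ∧
      {v : V | (G.neighborSet v).ncard = 2}.ncard = i - j :=
  have h := hG.degreesTwoOrThree.2
  ⟨h.two_or_three, h.ncard_degree_two⟩

/-- For `i ≥ 1` and `0 ≤ j ≤ i`, every `G ∈ F_{i,j}` has every vertex of degree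
two or three, and has exactly `i − j` vertices of degree two. -/
theorem statement_3 (i j : ℕ) (hi : 1 ≤ i) (hj : j ≤ i) {V : Type} (G : SimpleGraph V)
    (hG : IsInF i j G) :
    (∀ v : V, (G.neighborSet v).ncard = 2 ∨ (G.neighborSet v).ncard = 3) ∧
      {v : V | (G.neighborSet v).ncard = 2}.ncard = i - j :=
  statement_3_general i j G hG
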